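/- Let G be a finite graph and f : V(G) → ℕ. If e(G) > Σ_{v ∈ V(G)} f(v), then G has an induced subgraph H such that d_H(v) > f(v) for every v ∈ V(H). -/

import Mathlib

namespace Paper

variable {V : Type*} {E : Type*} {W : Type*}

/-- The degree of a vertex. -/
noncomputable def deg (G : SimpleGraph V) (v : V) : ℕ := (G.neighborSet v).ncard

/-- The number of edges of a graph. -/
noncomputable def edgeCount (G : SimpleGraph V) : ℕ := G.edgeSet.ncard

/-- The minimum degree δ(G). -/
noncomputable def minDeg (G : SimpleGraph V) : ℕ := sInf (Set.range (deg G))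

/-- The clique number ω(G). -/
noncomputable def cliqueNum (G : SimpleGraph V) : ℕ :=
  sSup {n | ∃ s : Finset V, G.IsNClique n s}

/-- `G` is (a copy of) the complete graph `K_k`. -/
def IsCompleteK (k : ℕ) (G : SimpleGraph V) : Prop :=
  Nat.card V = k ∧ ∀ u v : V, u ≠ v → G.Adj u v

/-- `D` is an orientation of the simple graph `G`: every edge gets exactly one direction. -/
def IsOrientation (G : SimpleGraph V) (D : V → V → Prop) : Prop :=
  (∀ u v, D u v → G.Adj u v) ∧ ∀ u v, G.Adj u v → (D u v ↔ ¬ D v u)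

/-- Out-degree of `v` in the digraph `D`. -/
noncomputable def outDeg (D : V → V → Prop) (v : V) : ℕ := {u | D v u}.ncard

/-- `A` is a spanning Eulerian subdigraph of `D`: a set of directed edges of `D` in which
every vertex has equal in-degree and out-degree. -/
def IsEulerianSub (D : V → V → Prop) (A : Set (V × V)) : Prop :=
  (∀ p ∈ A, D p.1 p.2) ∧
    ∀ v : V, {p | p ∈ A ∧ p.2 = v}.ncard = {p | p ∈ A ∧ p.1 = v}.ncard

/-- `EE D`: the number of even spanning Eulerian subgraphs of `D`. -/
noncomputable def EE (D : V → V → Prop) : ℕ :=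
  {A : Set (V × V) | IsEulerianSub D A ∧ Even A.ncard}.ncard

/-- `EO D`: the number of odd spanning Eulerian subgraphs of `D`. -/
noncomputable def EO (D : V → V → Prop) : ℕ :=
  {A : Set (V × V) | IsEulerianSub D A ∧ ¬ Even A.ncard}.ncard

/-- `G` is `f`-Alon–Tarsi: it has an orientation `D` with `f v ≥ d⁺(v) + 1` for every `v`
and `EE D ≠ EO D`. -/
def IsfAT (G : SimpleGraph V) (f : V → ℕ) : Prop :=
  ∃ D : V → V → Prop, IsOrientation G D ∧ (∀ v, outDeg D v + 1 ≤ f v) ∧ EE D ≠ EO D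

/-- `G` is AT-reducible to the nonempty induced subgraph on `S`, which is `f_H`-AT for
`f_H v = δ(G) + d_H v - d_G v`. -/
def ATReducibleTo (G : SimpleGraph V) (S : Set V) : Prop :=
  S.Nonempty ∧ IsfAT (G.induce S) (fun v => minDeg G + deg (G.induce S) v - deg G ↑v)

/-- `G` is AT-irreducible: it is AT-reducible to no nonempty induced subgraph. -/
def ATIrreducible (G : SimpleGraph V) : Prop := ∀ S : Set V, ¬ ATReducibleTo G S

/-- Gallai's function `g_k(n, c)`. -/
noncomputable def gfun (k n : ℕ) (c : ℝ) : ℝ :=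
  ((k : ℝ) - 1 + ((k : ℝ) - 3) / (((k : ℝ) - c) * ((k : ℝ) - 1) + (k : ℝ) - 3)) * n

/-- The constant `α_k = 1/2 - 1/((k-1)(k-2))`. -/
noncomputable def alphaK (k : ℕ) : ℝ := 1 / 2 - 1 / (((k : ℝ) - 1) * ((k : ℝ) - 2))

/-! Take an inclusion-minimal vertex set `S` with `∑_{v ∈ S} f v < e(G[S])`; the whole vertex set
qualifies, and `S ≠ ∅` since `G[∅]` has no edges. Deleting `v ∈ S` removes exactly `d_{G[S]}(v)`
edges and `f v` from the sum, so minimality forces `f v < d_{G[S]}(v)`. -/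

section InducedEdges

variable {V : Type*} (G : SimpleGraph V)

lemma edgeCount_induce (S : Set V) : edgeCount (G.induce S) = (G.edgeSet ∩ S.sym2).ncard := by
  rw [edgeCount, ← Set.ncard_image_of_injective _
    (Function.Embedding.subtype (· ∈ S)).sym2Map.injective]
  congr 1
  ext e
  induction e using Sym2.ind with
  | _ a b => aesop (add simp [Sym2.exists, SimpleGraph.adj_comm])

lemma deg_induce (S : Set V) (v : S) : deg (G.induce S) v = (G.neighborSet v ∩ S).ncard := by
  rw [deg, ← Set.ncard_image_of_injective _ Subtype.val_injective]
  congr 1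
  ext u
  simp

lemma ncard_edgeSet_inter_sym2_eq_add [Finite V] {S : Set V} {v : V} (hv : v ∈ S) :
    (G.edgeSet ∩ S.sym2).ncard =
      (G.edgeSet ∩ (S \ {v}).sym2).ncard + (G.neighborSet v ∩ S).ncard := by
  have hsplit : G.edgeSet ∩ S.sym2 =
      G.edgeSet ∩ (S \ {v}).sym2 ∪ Sym2.mkEmbedding v '' (G.neighborSet v ∩ S) := by
    ext ⟨a, b⟩
    simp only [Set.mem_inter_iff, SimpleGraph.mem_edgeSet, Set.mk_mem_sym2_iff, Set.mem_union,
      Set.mem_sdiff, Set.mem_singleton_iff, Set.mem_image, SimpleGraph.mem_neighborSet,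
      Sym2.mkEmbedding_apply, Sym2.eq_iff]
    grind [SimpleGraph.adj_comm, SimpleGraph.Adj.ne]
  have hdisj :
      Disjoint (G.edgeSet ∩ (S \ {v}).sym2) (Sym2.mkEmbedding v '' (G.neighborSet v ∩ S)) := by
    rw [Set.disjoint_left]
    rintro _ ⟨_, he⟩ ⟨u, _, rfl⟩
    exact (Set.mk_mem_sym2_iff.1 he).1.2 rfl
  rw [hsplit, Set.ncard_union_eq hdisj,
    Set.ncard_image_of_injective _ (Sym2.mkEmbedding v).injective]

lemma edgeCount_induce_eq_add_deg [Finite V] {S : Set V} (v : S) :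
    edgeCount (G.induce S) = edgeCount (G.induce (S \ {↑v})) + deg (G.induce S) v := by
  rw [edgeCount_induce, edgeCount_induce, deg_induce, ncard_edgeSet_inter_sym2_eq_add G v.2]

end InducedEdges

theorem statement_18 {V : Type*} [Fintype V] (G : SimpleGraph V) (f : V → ℕ)
    (h : ∑ v : V, f v < edgeCount G) :
    ∃ S : Set V, S.Nonempty ∧ ∀ v : ↥S, f ↑v < deg (G.induce S) v := by
  classical
  obtain ⟨S, hS, hmin⟩ := exists_minimal_of_wellFoundedLT
    (fun S : Finset V ↦ ∑ v ∈ S, f v < edgeCount (G.induce (S : Set V)))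
    ⟨Finset.univ, by rwa [edgeCount_induce, Finset.coe_univ, Set.sym2_univ, Set.inter_univ]⟩
  refine ⟨S, ?_, fun v ↦ ?_⟩
  · rw [Finset.coe_nonempty, Finset.nonempty_iff_ne_empty]
    rintro rfl
    rw [edgeCount_induce, Finset.coe_empty, Set.sym2_empty, Set.inter_empty] at hS
    simp at hS
  · have hv : ↑v ∈ S := v.2
    have herase : ¬ ∑ u ∈ S.erase v, f u < edgeCount (G.induce (S.erase v : Set V)) :=
      fun h' ↦ (Finset.erase_ssubset hv).not_ge (hmin h' (Finset.erase_subset _ _))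
    have hedges := edgeCount_induce_eq_add_deg G v
    rw [← Finset.coe_erase] at hedges
    have hsum := Finset.add_sum_erase S f hv
    omega

end Paper
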